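/- Let G be an edge-colored graph, S a vertex cover of G, and suppose v, v' ∈ V∖S are equivalent with respect to S. Then for any u ∈ N(v), the positions G−u−v and G−u−v' have the same game value for Colored Arc Kayles: f_B(G−u−v) holds iff f_B(G−u−v') holds, and f_W(G−u−v) holds iff f_W(G−u−v') holds. -/

import Mathlib

/-- The three edge colors: gray, black, white. -/
inductive EColor : Type
  | gray | black | white
deriving DecidableEq

/-- An edge-colored graph on the vertex type `V`: `col u v` is the color of the
edge `{u,v}` if it is present, and `none` otherwise. -/
structure ECGraph (V : Type) where
  col : V → V → Option EColor
  symm : ∀ u v, col u v = col v u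
  loopless : ∀ v, col v v = none

mutual
  /-- `fB G A` : the first player B wins Colored Arc Kayles on the position of `G`
  induced by the vertex set `A`, B to move. B must pick a gray or black edge. -/
  def fB {V : Type} [DecidableEq V] (G : ECGraph V) (A : Finset V) : Prop :=
    ∃ u : {x // x ∈ A}, ∃ v : {x // x ∈ A},
      (G.col u.1 v.1 = some EColor.gray ∨ G.col u.1 v.1 = some EColor.black) ∧
      ¬ fW G (A \ {u.1, v.1})
  termination_by A.card
  decreasing_by
    have h1 : A \ {u.1, v.1} ⊆ A.erase u.1 := by
      intro x hx
      simp only [Finset.mem_sdiff, Finset.mem_insert, Finset.mem_singleton,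
        Finset.mem_erase] at hx ⊢
      tauto
    exact lt_of_le_of_lt (Finset.card_le_card h1) (Finset.card_erase_lt_of_mem u.2)

  /-- `fW G A` : the second player W wins the position `A` of `G`, W to move.
  W must pick a gray or white edge. -/
  def fW {V : Type} [DecidableEq V] (G : ECGraph V) (A : Finset V) : Prop :=
    ∃ u : {x // x ∈ A}, ∃ v : {x // x ∈ A},
      (G.col u.1 v.1 = some EColor.gray ∨ G.col u.1 v.1 = some EColor.white) ∧
      ¬ fB G (A \ {u.1, v.1})
  termination_by A.card
  decreasing_by
    have h1 : A \ {u.1, v.1} ⊆ A.erase u.1 := by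
      intro x hx
      simp only [Finset.mem_sdiff, Finset.mem_insert, Finset.mem_singleton,
        Finset.mem_erase] at hx ⊢
      tauto
    exact lt_of_le_of_lt (Finset.card_le_card h1) (Finset.card_erase_lt_of_mem u.2)
end

/-- The neighborhood of a vertex. -/
def Nbhd {V : Type} (G : ECGraph V) (v : V) : Set V := {u | G.col v u ≠ none}

/-- `S` is a vertex cover: every edge has at least one endpoint in `S`. -/
def IsVertexCover {V : Type} (G : ECGraph V) (S : Set V) : Prop :=
  ∀ u v : V, G.col u v ≠ none → u ∈ S ∨ v ∈ S

/-!
Swapping two equivalent vertices `v, v'` preserves every edge color, so it is an automorphism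
of the colored graph, and game values are invariant under automorphisms. The swap fixes `u`
(a neighbour of `v` is neither `v` nor `v'`, since `v` and `v'` are not adjacent) and hence
maps the position `G − u − v` onto `G − u − v'`.
-/

namespace ECGraph

variable {V : Type} (G : ECGraph V)

def IsAut (σ : Equiv.Perm V) : Prop :=
  ∀ x y, G.col (σ x) (σ y) = G.col x y

lemma col_eq_of_nbhd_eq {v v' : V} (hN : Nbhd G v = Nbhd G v')
    (hc : ∀ u ∈ Nbhd G v, G.col u v = G.col u v') (x : V) :
    G.col v x = G.col v' x := by
  by_cases hx : x ∈ Nbhd G v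
  · rw [G.symm v, G.symm v']
    exact hc x hx
  · have hx' : x ∉ Nbhd G v' := hN ▸ hx
    simp only [Nbhd, Set.mem_ofPred_eq, not_not] at hx hx'
    rw [hx, hx']

variable [DecidableEq V]

lemma isAut_swap_of_col_eq {v v' : V} (h : ∀ x, G.col v x = G.col v' x) :
    G.IsAut (Equiv.swap v v') := by
  have hleft : ∀ x y, G.col (Equiv.swap v v' x) y = G.col x y := by
    intro x y
    rcases eq_or_ne x v with rfl | hxv
    · rw [Equiv.swap_apply_left, h]
    rcases eq_or_ne x v' with rfl | hxv'
    · rw [Equiv.swap_apply_right, h]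
    · rw [Equiv.swap_apply_of_ne_of_ne hxv hxv']
  intro x y
  rw [hleft, G.symm, hleft, G.symm]

/-- Both `fB` and `fW` unfold to the left-hand shape, `legal` being the color constraint of the
player to move. -/
lemma exists_move_image_iff {σ : Equiv.Perm V} (hσ : G.IsAut σ) (A : Finset V)
    (legal : Option EColor → Prop) (P : Finset V → Prop)
    (hP : ∀ a ∈ A, ∀ b ∈ A, P ((A \ {a, b}).image σ) ↔ P (A \ {a, b})) :
    (∃ u : {x // x ∈ A.image σ}, ∃ w : {x // x ∈ A.image σ},
        legal (G.col u.1 w.1) ∧ ¬ P (A.image σ \ {u.1, w.1})) ↔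
      ∃ u : {x // x ∈ A}, ∃ w : {x // x ∈ A},
        legal (G.col u.1 w.1) ∧ ¬ P (A \ {u.1, w.1}) := by
  have himage : ∀ a b, A.image σ \ {σ a, σ b} = (A \ {a, b}).image σ := by
    intro a b
    rw [Finset.image_sdiff _ _ σ.injective, Finset.image_insert, Finset.image_singleton]
  constructor
  · rintro ⟨⟨_, hu⟩, ⟨_, hw⟩, hlegal, hmove⟩
    obtain ⟨a, ha, rfl⟩ := Finset.mem_image.mp hu
    obtain ⟨b, hb, rfl⟩ := Finset.mem_image.mp hw
    refine ⟨⟨a, ha⟩, ⟨b, hb⟩, hσ a b ▸ hlegal, ?_⟩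
    rwa [himage, hP a ha b hb] at hmove
  · rintro ⟨⟨a, ha⟩, ⟨b, hb⟩, hlegal, hmove⟩
    refine ⟨⟨σ a, Finset.mem_image_of_mem σ ha⟩, ⟨σ b, Finset.mem_image_of_mem σ hb⟩,
      (hσ a b).symm ▸ hlegal, ?_⟩
    rwa [himage, hP a ha b hb]

theorem fB_image_iff_and_fW_image_iff {σ : Equiv.Perm V} (hσ : G.IsAut σ) (A : Finset V) :
    (fB G (A.image σ) ↔ fB G A) ∧ (fW G (A.image σ) ↔ fW G A) := by
  induction A using Finset.strongInduction with
  | H A ih =>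
    have hsub : ∀ a ∈ A, ∀ b ∈ A, A \ {a, b} ⊂ A := fun a ha b hb =>
      Finset.sdiff_ssubset (Finset.insert_subset ha (Finset.singleton_subset_iff.mpr hb))
        (Finset.insert_nonempty a {b})
    constructor
    · rw [fB, fB]
      exact G.exists_move_image_iff hσ A (fun c => c = some .gray ∨ c = some .black) _
        fun a ha b hb => (ih _ (hsub a ha b hb)).2
    · rw [fW, fW]
      exact G.exists_move_image_iff hσ A (fun c => c = some .gray ∨ c = some .white) _
        fun a ha b hb => (ih _ (hsub a ha b hb)).1

end ECGraph

/-- If `v, v' ∉ S` are equivalent with respect to a vertex cover `S` of `G`, then for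
any `u ∈ N(v)` the positions `G − u − v` and `G − u − v'` have the same game value for
Colored Arc Kayles. -/
theorem equivalent_vertices_same_game_value {V : Type} [Fintype V] [DecidableEq V]
    (G : ECGraph V) (S : Set V) (hS : IsVertexCover G S)
    (v v' : V) (hv : v ∉ S) (hv' : v' ∉ S)
    (hN : Nbhd G v = Nbhd G v')
    (hc : ∀ u ∈ Nbhd G v, G.col u v = G.col u v')
    (u : V) (hu : u ∈ Nbhd G v) :
    (fB G (Finset.univ \ {u, v}) ↔ fB G (Finset.univ \ {u, v'})) ∧
    (fW G (Finset.univ \ {u, v}) ↔ fW G (Finset.univ \ {u, v'})) := by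
  have htwin := G.col_eq_of_nbhd_eq hN hc
  have huv : u ≠ v := by
    rintro rfl
    exact hu (G.loopless u)
  have huv' : u ≠ v' := by
    rintro rfl
    exact hu (by rw [htwin, G.loopless])
  have himage : (Finset.univ \ {u, v}).image (Equiv.swap v v') = Finset.univ \ {u, v'} := by
    rw [Finset.image_sdiff _ _ (Equiv.swap v v').injective, Finset.image_univ_equiv,
      Finset.image_insert, Finset.image_singleton, Equiv.swap_apply_of_ne_of_ne huv huv',
      Equiv.swap_apply_left]
  have hvalue :=
    G.fB_image_iff_and_fW_image_iff (G.isAut_swap_of_col_eq htwin) (Finset.univ \ {u, v})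
  rw [himage] at hvalue
  exact ⟨hvalue.1.symm, hvalue.2.symm⟩
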